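/- Let Γ be a commutative thick weakly distance-regular digraph. If Γ_{a,b} ∈ Γ_{q-1,1}^i Γ_{1,h-1}^j for some h ∉ {q-1, q} with h ∈ T, (1,q-1) attained, i,j ∈ {1,2}, and Γ_{1,h-1}^2 ∩ Γ_{1,q-1}Γ_{q-1,1} ≠ ∅, then Γ_{a,b} ∈ Γ_{q-1,1}^i Γ_{h-1,1}^j. -/

import Mathlib

/-!
Common framework: commutative thick weakly distance-regular digraphs.
-/

variable {V : Type*}

/-- There is a directed walk of length `n` from `x` to `y`. -/
def HasWalk (adj : V → V → Prop) (x y : V) (n : ℕ) : Prop :=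
  ∃ f : ℕ → V, f 0 = x ∧ f n = y ∧ ∀ i < n, adj (f i) (f (i + 1))

/-- Directed distance `∂(x,y)`. -/
noncomputable def ddist (adj : V → V → Prop) (x y : V) : ℕ :=
  sInf {n | HasWalk adj x y n}

/-- Two-way distance `∂̃(x,y) = (∂(x,y), ∂(y,x))`. -/
noncomputable def tdist (adj : V → V → Prop) (x y : V) : ℕ × ℕ :=
  (ddist adj x y, ddist adj y x)

/-- The pair `i` is an attained two-way distance, i.e. `i ∈ ∂̃(Γ)`. -/
def Attained (adj : V → V → Prop) (i : ℕ × ℕ) : Prop :=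
  ∃ x y : V, tdist adj x y = i

/-- Intersection number `p^h_{i,j}`: for attained `h` it is the common cardinality of
`{z | ∂̃(x,z) = i, ∂̃(z,y) = j}` over pairs with `∂̃(x,y) = h` (and `0` otherwise). -/
noncomputable def pnum (adj : V → V → Prop) (h i j : ℕ × ℕ) : ℕ :=
  sSup {n | ∃ x y : V, tdist adj x y = h ∧
    n = Set.ncard {z : V | tdist adj x z = i ∧ tdist adj z y = j}}

/-- Valency `k_i = |Γ_i(x)|`. -/
noncomputable def kval (adj : V → V → Prop) (i : ℕ × ℕ) : ℕ :=
  pnum adj (0, 0) i i.swap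

/-- Adjacency of the subdigraph `Δ_J`: arcs of type `(1, t-1)` for `t ∈ J`. -/
def deltaAdj (adj : V → V → Prop) (J : Set ℕ) (u v : V) : Prop :=
  ∃ t ∈ J, tdist adj u v = (1, t - 1)

/-- A circuit of length `s`. -/
def IsCircuit (adj : V → V → Prop) (s : ℕ) (f : ℕ → V) : Prop :=
  0 < s ∧ f s = f 0 ∧ ∀ i < s, adj (f i) (f (i + 1))

/-- Strongly connected. -/
def IsStrong (adj : V → V → Prop) : Prop :=
  ∀ x y : V, ∃ n, HasWalk adj x y n

/-- Weakly distance-regular: the intersection numbers are well defined. -/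
def IsWDR (adj : V → V → Prop) : Prop :=
  ∀ (i j : ℕ × ℕ) (x y x' y' : V), tdist adj x y = tdist adj x' y' →
    Set.ncard {z : V | tdist adj x z = i ∧ tdist adj z y = j}
      = Set.ncard {z : V | tdist adj x' z = i ∧ tdist adj z y' = j}

/-- Thick: `p^h_{i,i}, p^h_{i,i*} ∈ {0, k_i}`. -/
def IsThick (adj : V → V → Prop) : Prop :=
  ∀ h i : ℕ × ℕ,
    (pnum adj h i i = 0 ∨ pnum adj h i i = kval adj i) ∧
    (pnum adj h i i.swap = 0 ∨ pnum adj h i i.swap = kval adj i)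

/-- A thick weakly distance-regular digraph (as a property of an adjacency relation). -/
def IsWDRThick (adj : V → V → Prop) : Prop :=
  IsStrong adj ∧ IsWDR adj ∧ IsThick adj

/-- A commutative thick weakly distance-regular digraph. -/
structure CTWDR (V : Type*) [Fintype V] where
  adj : V → V → Prop
  loopless : ∀ v, ¬ adj v v
  strong : IsStrong adj
  wdr : IsWDR adj
  comm : ∀ (i j : ℕ × ℕ) (x y : V),
    Set.ncard {z : V | tdist adj x z = i ∧ tdist adj z y = j}
      = Set.ncard {z : V | tdist adj x z = j ∧ tdist adj z y = i}
  thick : IsThick adj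

namespace CTWDR

variable {V : Type*} [Fintype V] (G : CTWDR V)

/-- Product `EF` of two sets of relations (relations identified with two-way distances). -/
def prodS (E F : Set (ℕ × ℕ)) : Set (ℕ × ℕ) :=
  {h | ∃ i ∈ E, ∃ j ∈ F, pnum G.adj h i j ≠ 0}

/-- Powers `Γ_i^l` (with `Γ_i^0 = {Γ_{(0,0)}}` and `Γ_i^1 = {Γ_i}`). -/
def pow (i : ℕ × ℕ) : ℕ → Set (ℕ × ℕ)
  | 0 => {(0, 0)}
  | 1 => {i}
  | n + 2 => G.prodS (pow i (n + 1)) {i}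

/-- The pair `(1, s-1)` is pure: every circuit of length `s` containing an arc of type
`(1, s-1)` consists of arcs of type `(1, s-1)`. -/
def Pure (s : ℕ) : Prop :=
  ∀ f : ℕ → V, IsCircuit G.adj s f →
    (∃ i < s, tdist G.adj (f i) (f (i + 1)) = (1, s - 1)) →
    ∀ i < s, tdist G.adj (f i) (f (i + 1)) = (1, s - 1)

/-- `(1, s-1)` is mixed. -/
def Mixed (s : ℕ) : Prop := ¬ G.Pure s

/-- Configuration `C(q)` exists. -/
def Cexists (q : ℕ) : Prop :=
  pnum G.adj (1, q - 2) (1, q - 1) (1, q - 1) ≠ 0 ∧ G.Pure (q - 1)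

/-- Configuration `D(q)` exists. -/
def Dexists (q : ℕ) : Prop :=
  pnum G.adj (1, q - 1) (1, q - 2) (q - 2, 1) ≠ 0 ∧ G.Pure (q - 1)

/-- A closed set of relations: `Γ_{i*}Γ_j ⊆ F` for all `i, j ∈ F`. -/
def Closed (F : Set (ℕ × ℕ)) : Prop :=
  ∀ i ∈ F, ∀ j ∈ F, G.prodS {i.swap} {j} ⊆ F

/-- The minimal closed set `⟨F⟩` containing `F`. -/
def genClosed (F : Set (ℕ × ℕ)) : Set (ℕ × ℕ) :=
  ⋂₀ {C | F ⊆ C ∧ G.Closed C}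

/-- The block `F_J(x)` of the closed set generated by `{Γ_{1,t-1}}_{t ∈ J}`. -/
def block (J : Set ℕ) (x : V) : Set V :=
  {y | tdist G.adj x y ∈ G.genClosed {i | ∃ t ∈ J, i = (1, t - 1)}}

end CTWDR

/-!
Write `A = (1, q-1)` and `B = (1, h-1)`, and pick `c ∈ Γ_B² ∩ Γ_A Γ_{A*}`. Thickness turns both
nonzero intersection numbers into valencies, so whenever `∂̃(m,t) = c` every `A`-neighbour of `m`
is an `A`-neighbour of `t`, and every `B`-neighbour of `m` is a `B*`-neighbour of `t`. Going
through such `c`-partners, a `B`-path of length `j ≤ 2` from `m` to `y` is replaced by a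
`B*`-path of the same length from some `t` to `y` with `Γ_A(m) ⊆ Γ_A(t)`; the last vertex before
`m` on an `A*`-path from `x` lies in `Γ_A(m)`, hence in `Γ_A(t)`, so the path ends at `t` instead.
-/

section TwoWayDistance

variable {V : Type*} {adj : V → V → Prop}

theorem tdist_self (adj : V → V → Prop) (x : V) : tdist adj x x = (0, 0) := by
  have h : ddist adj x x = 0 :=
    Nat.sInf_eq_zero.mpr (Or.inl ⟨fun _ => x, rfl, rfl, fun _ h => absurd h (Nat.not_lt_zero _)⟩)
  simp [tdist, h]

theorem tdist_swap (adj : V → V → Prop) (x y : V) : tdist adj y x = (tdist adj x y).swap := rfl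

theorem pnum_tdist (hw : IsWDR adj) (i j : ℕ × ℕ) (x y : V) :
    pnum adj (tdist adj x y) i j = {z | tdist adj x z = i ∧ tdist adj z y = j}.ncard := by
  have hset : {n | ∃ x' y' : V, tdist adj x' y' = tdist adj x y ∧
      n = {z | tdist adj x' z = i ∧ tdist adj z y' = j}.ncard}
      = {{z | tdist adj x z = i ∧ tdist adj z y = j}.ncard} := by
    ext n
    constructor
    · rintro ⟨x', y', hx'y', rfl⟩
      exact hw i j x' y' x y hx'y'
    · rintro rfl
      exact ⟨x, y, rfl, rfl⟩
  rw [pnum, hset, csSup_singleton]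

theorem attained_of_pnum_ne_zero {c i j : ℕ × ℕ} (hne : pnum adj c i j ≠ 0) : Attained adj c := by
  by_contra hc
  refine hne ?_
  have hset : {n | ∃ x y : V, tdist adj x y = c ∧
      n = {z | tdist adj x z = i ∧ tdist adj z y = j}.ncard} = ∅ :=
    Set.eq_empty_iff_forall_notMem.mpr <| by
      rintro _ ⟨x, y, hxy, -⟩
      exact hc ⟨x, y, hxy⟩
  rw [pnum, hset, csSup_empty]
  rfl

theorem exists_of_pnum_tdist_ne_zero (hw : IsWDR adj) {i j : ℕ × ℕ} {x y : V}
    (hne : pnum adj (tdist adj x y) i j ≠ 0) : ∃ z, tdist adj x z = i ∧ tdist adj z y = j := by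
  rw [pnum_tdist hw] at hne
  exact Set.nonempty_of_ncard_ne_zero hne

variable [Finite V]

theorem pnum_tdist_ne_zero (hw : IsWDR adj) {x y z : V} :
    pnum adj (tdist adj x y) (tdist adj x z) (tdist adj z y) ≠ 0 := by
  rw [pnum_tdist hw]
  exact Set.ncard_ne_zero_of_mem (a := z) ⟨rfl, rfl⟩

theorem Attained.exists_tdist_eq (hw : IsWDR adj) {c : ℕ × ℕ} (hc : Attained adj c) (x : V) :
    ∃ y, tdist adj x y = c := by
  obtain ⟨p, s, rfl⟩ := hc
  have hne : pnum adj (tdist adj x x) (tdist adj p s) (tdist adj s p) ≠ 0 := by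
    rw [tdist_self, ← tdist_self adj p]
    exact pnum_tdist_ne_zero hw
  obtain ⟨y, hxy, -⟩ := exists_of_pnum_tdist_ne_zero hw hne
  exact ⟨y, hxy⟩

theorem tdist_eq_of_pnum_eq_kval (hw : IsWDR adj) {i j : ℕ × ℕ} {x y z : V}
    (hk : pnum adj (tdist adj x y) i j = kval adj i) (hxz : tdist adj x z = i) :
    tdist adj z y = j := by
  have hsub : {w | tdist adj x w = i ∧ tdist adj w y = j}
      ⊆ {w | tdist adj x w = i ∧ tdist adj w x = i.swap} := fun w hw =>
    ⟨hw.1, by rw [tdist_swap, hw.1]⟩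
  have hcard : {w | tdist adj x w = i ∧ tdist adj w x = i.swap}.ncard
      ≤ {w | tdist adj x w = i ∧ tdist adj w y = j}.ncard := by
    rw [← pnum_tdist hw i j x y, hk, kval, ← tdist_self adj x, pnum_tdist hw i i.swap x x]
  have heq := Set.eq_of_subset_of_ncard_le hsub hcard (Set.toFinite _)
  have hz : z ∈ {w | tdist adj x w = i ∧ tdist adj w x = i.swap} :=
    ⟨hxz, by rw [tdist_swap, hxz]⟩
  exact (heq ▸ hz).2

end TwoWayDistance

namespace CTWDR

variable {V : Type*} [Fintype V] (G : CTWDR V)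

/-- `Γ_i(x)`. -/
def nbhd (i : ℕ × ℕ) (x : V) : Set V := {z | tdist G.adj x z = i}

variable {G}

theorem tdist_mem_prodS {E F : Set (ℕ × ℕ)} {x y z : V}
    (hxz : tdist G.adj x z ∈ E) (hzy : tdist G.adj z y ∈ F) : tdist G.adj x y ∈ G.prodS E F :=
  ⟨_, hxz, _, hzy, pnum_tdist_ne_zero G.wdr⟩

theorem exists_of_tdist_mem_prodS {E F : Set (ℕ × ℕ)} {x y : V}
    (h : tdist G.adj x y ∈ G.prodS E F) : ∃ z, tdist G.adj x z ∈ E ∧ tdist G.adj z y ∈ F := by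
  obtain ⟨i, hi, j, hj, hne⟩ := h
  obtain ⟨z, rfl, rfl⟩ := exists_of_pnum_tdist_ne_zero G.wdr hne
  exact ⟨z, hi, hj⟩

theorem exists_of_mem_prodS {E F : Set (ℕ × ℕ)} {d : ℕ × ℕ} (h : d ∈ G.prodS E F) :
    ∃ x z y, tdist G.adj x y = d ∧ tdist G.adj x z ∈ E ∧ tdist G.adj z y ∈ F := by
  obtain ⟨x, y, rfl⟩ : Attained G.adj d := by
    obtain ⟨_, -, _, -, hne⟩ := h
    exact attained_of_pnum_ne_zero hne
  obtain ⟨z, hxz, hzy⟩ := exists_of_tdist_mem_prodS h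
  exact ⟨x, z, y, rfl, hxz, hzy⟩

theorem tdist_mem_pow_two_iff {i : ℕ × ℕ} {x y : V} :
    tdist G.adj x y ∈ G.pow i 2 ↔ ∃ z, tdist G.adj x z = i ∧ tdist G.adj z y = i :=
  ⟨exists_of_tdist_mem_prodS, fun ⟨_, hxz, hzy⟩ => tdist_mem_prodS hxz hzy⟩

theorem tdist_eq_of_pnum_ne_zero {i : ℕ × ℕ} {x y z : V}
    (hne : pnum G.adj (tdist G.adj x y) i i ≠ 0) (hxz : tdist G.adj x z = i) :
    tdist G.adj z y = i :=
  tdist_eq_of_pnum_eq_kval G.wdr ((G.thick _ i).1.resolve_left hne) hxz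

theorem nbhd_subset_of_pnum_ne_zero {i : ℕ × ℕ} {x y : V}
    (hne : pnum G.adj (tdist G.adj x y) i i.swap ≠ 0) : G.nbhd i x ⊆ G.nbhd i y := fun z hxz => by
  change tdist G.adj y z = i
  rw [tdist_swap, tdist_eq_of_pnum_eq_kval G.wdr ((G.thick _ i).2.resolve_left hne) hxz,
    Prod.swap_swap]

theorem tdist_mem_pow_swap_of_nbhd_subset {i : ℕ × ℕ} {m t : V} (hmt : G.nbhd i m ⊆ G.nbhd i t)
    {n : ℕ} (hn : n ≠ 0) {x : V} (hxm : tdist G.adj x m ∈ G.pow i.swap n) :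
    tdist G.adj x t ∈ G.pow i.swap n := by
  have hlast : ∀ {w : V}, tdist G.adj w m = i.swap → tdist G.adj w t = i.swap := fun hwm => by
    have hw : tdist G.adj t _ = i := hmt (show tdist G.adj m _ = i by rw [tdist_swap, hwm]; rfl)
    rw [tdist_swap, hw]
  match n, hxm with
  | 1, hxm => exact hlast hxm
  | k + 2, hxm =>
    obtain ⟨w, hxw, hwm⟩ := exists_of_tdist_mem_prodS hxm
    exact tdist_mem_prodS hxw (hlast hwm)

section Reroute

variable {A B c : ℕ × ℕ}

theorem exists_nbhd_subset_of_tdist_eq (hcA : pnum G.adj c A A.swap ≠ 0)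
    (hcB : pnum G.adj c B B ≠ 0) {m y : V} (hmy : tdist G.adj m y = B) :
    ∃ t, G.nbhd A m ⊆ G.nbhd A t ∧ tdist G.adj t y = B.swap := by
  obtain ⟨t, rfl⟩ := (attained_of_pnum_ne_zero hcB).exists_tdist_eq G.wdr m
  refine ⟨t, nbhd_subset_of_pnum_ne_zero hcA, ?_⟩
  rw [tdist_swap, tdist_eq_of_pnum_ne_zero hcB hmy]

theorem exists_nbhd_subset_of_mem_pow_two (hcA : pnum G.adj c A A.swap ≠ 0)
    (hcB : pnum G.adj c B B ≠ 0) {m y : V} (hmy : tdist G.adj m y ∈ G.pow B 2) :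
    ∃ t, G.nbhd A m ⊆ G.nbhd A t ∧ tdist G.adj t y ∈ G.pow B.swap 2 := by
  obtain ⟨w, hmw, hwy⟩ := tdist_mem_pow_two_iff.1 hmy
  have partner := (attained_of_pnum_ne_zero hcB).exists_tdist_eq G.wdr
  have stepB : ∀ {p s v : V}, tdist G.adj p s = c → tdist G.adj p v = B → tdist G.adj v s = B :=
    fun hps => tdist_eq_of_pnum_ne_zero (hps ▸ hcB)
  obtain ⟨t₀, hmt₀⟩ := partner m
  obtain ⟨u, hwu⟩ := partner w
  obtain ⟨t, ht₀t⟩ := partner t₀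
  have hut : tdist G.adj u t = B := stepB ht₀t (stepB hwu (stepB hmt₀ hmw))
  refine ⟨t, (nbhd_subset_of_pnum_ne_zero (hmt₀ ▸ hcA)).trans
    (nbhd_subset_of_pnum_ne_zero (ht₀t ▸ hcA)), tdist_mem_pow_two_iff.2 ⟨u, ?_, ?_⟩⟩
  · rw [tdist_swap, hut]
  · rw [tdist_swap, stepB hwu hwy]

theorem exists_nbhd_subset_of_mem_pow (hcA : pnum G.adj c A A.swap ≠ 0)
    (hcB : pnum G.adj c B B ≠ 0) {j : ℕ} (hj : j = 1 ∨ j = 2) {m y : V}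
    (hmy : tdist G.adj m y ∈ G.pow B j) :
    ∃ t, G.nbhd A m ⊆ G.nbhd A t ∧ tdist G.adj t y ∈ G.pow B.swap j := by
  rcases hj with rfl | rfl
  · exact exists_nbhd_subset_of_tdist_eq hcA hcB hmy
  · exact exists_nbhd_subset_of_mem_pow_two hcA hcB hmy

end Reroute

end CTWDR

theorem stmt19_general {V : Type*} [Fintype V] (G : CTWDR V) (q h a b : ℕ)
    (hcap : (G.pow (1, h - 1) 2 ∩ G.prodS {(1, q - 1)} {(q - 1, 1)}).Nonempty)
    (i j : ℕ) (hi : i = 1 ∨ i = 2) (hj : j = 1 ∨ j = 2)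
    (hmem : (a, b) ∈ G.prodS (G.pow (q - 1, 1) i) (G.pow (1, h - 1) j)) :
    (a, b) ∈ G.prodS (G.pow (q - 1, 1) i) (G.pow (h - 1, 1) j) := by
  obtain ⟨c, ⟨_, rfl, _, rfl, hcB⟩, ⟨_, rfl, _, rfl, hcA⟩⟩ := hcap
  obtain ⟨x, m, y, hxy, hxm, hmy⟩ := CTWDR.exists_of_mem_prodS hmem
  obtain ⟨t, hmt, hty⟩ := CTWDR.exists_nbhd_subset_of_mem_pow (A := (1, q - 1)) hcA hcB hj hmy
  rw [← hxy]
  exact CTWDR.tdist_mem_prodS (CTWDR.tdist_mem_pow_swap_of_nbhd_subset hmt (by omega) hxm) hty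

/-- Lemma 6.9: if `Γ_{a,b} ∈ Γ_{q-1,1}^i Γ_{1,h-1}^j` with `h ∉ {q-1,q}`,
`i, j ∈ {1,2}` and `Γ_{1,h-1}^2 ∩ Γ_{1,q-1}Γ_{q-1,1} ≠ ∅`, then
`Γ_{a,b} ∈ Γ_{q-1,1}^i Γ_{h-1,1}^j`. -/
theorem stmt19 {V : Type*} [Fintype V] (G : CTWDR V) (q h a b : ℕ)
    (hq : Attained G.adj (1, q - 1)) (hhatt : Attained G.adj (1, h - 1))
    (hh1 : h ≠ q - 1) (hh2 : h ≠ q)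
    (hcap : (G.pow (1, h - 1) 2 ∩ G.prodS {(1, q - 1)} {(q - 1, 1)}).Nonempty)
    (i j : ℕ) (hi : i = 1 ∨ i = 2) (hj : j = 1 ∨ j = 2)
    (hmem : (a, b) ∈ G.prodS (G.pow (q - 1, 1) i) (G.pow (1, h - 1) j)) :
    (a, b) ∈ G.prodS (G.pow (q - 1, 1) i) (G.pow (h - 1, 1) j) :=
  stmt19_general G q h a b hcap i j hi hj hmem
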